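/- Let (M,d) be a metric space and S ⊆ M a closed set with the following property: for all x, y ∈ M∖S, the induced length distance of M∖S equals the ambient distance, i.e. d_{M∖S}(x,y) = edist_M(x,y) (equivalently, any two points of M∖S can be joined, for every ε > 0, by a continuous path in M∖S of length at most edist_M(x,y) + ε). Let (W_k)_{k∈ℕ} be a nondecreasing sequence of open subsets of M with W_k ⊆ M∖S and ⋃_k W_k = M∖S, and let K ⊆ W₀ be compact with d_{W₀}(x,y) < ∞ for all x, y ∈ K. Then sup_{x,y ∈ K} ( d_{W_k}(x,y) − edist_M(x,y) ) (truncated subtraction in [0,∞]) tends to 0 as k → ∞. -/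

import Mathlib

open Set Filter ENNReal

/-- The induced length distance of a subset `W` of a metric space: the infimum of the
lengths (total variations over `[0,1]`) of continuous curves from `x` to `y` whose
image on `[0,1]` lies in `W`; it is `∞` when no such curve exists. -/
noncomputable def inducedLengthDist {X : Type*} [MetricSpace X] (W : Set X) (x y : X) :
    ℝ≥0∞ :=
  sInf {l : ℝ≥0∞ | ∃ γ : ℝ → X, Continuous γ ∧ γ 0 = x ∧ γ 1 = y ∧
    (∀ u ∈ Icc (0:ℝ) 1, γ u ∈ W) ∧ l = eVariationOn γ (Icc (0:ℝ) 1)}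

section Aux

variable {X : Type*} [MetricSpace X]

lemma inducedLengthDist_le_of_path {W : Set X} {x y : X} {γ : ℝ → X} (hγ : Continuous γ)
    (h0 : γ 0 = x) (h1 : γ 1 = y) (hmem : ∀ u ∈ Icc (0:ℝ) 1, γ u ∈ W) :
    inducedLengthDist W x y ≤ eVariationOn γ (Icc (0:ℝ) 1) :=
  sInf_le ⟨γ, hγ, h0, h1, hmem, rfl⟩

lemma inducedLengthDist_mono {W W' : Set X} (h : W ⊆ W') (x y : X) :
    inducedLengthDist W' x y ≤ inducedLengthDist W x y := by
  apply sInf_le_sInf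
  rintro l ⟨γ, h1, h2, h3, h4, h5⟩
  exact ⟨γ, h1, h2, h3, fun u hu => h (h4 u hu), h5⟩

lemma edist_le_inducedLengthDist (W : Set X) (x y : X) :
    edist x y ≤ inducedLengthDist W x y := by
  refine le_sInf ?_
  rintro l ⟨γ, hγ, h0, h1, hmem, rfl⟩
  rw [← h0, ← h1]
  exact eVariationOn.edist_le γ (left_mem_Icc.2 one_pos.le) (right_mem_Icc.2 one_pos.le)

lemma exists_path_lt {W : Set X} {x y : X} {c : ℝ≥0∞} (h : inducedLengthDist W x y < c) :
    ∃ γ : ℝ → X, Continuous γ ∧ γ 0 = x ∧ γ 1 = y ∧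
      (∀ u ∈ Icc (0:ℝ) 1, γ u ∈ W) ∧ eVariationOn γ (Icc (0:ℝ) 1) < c := by
  obtain ⟨l, hl, hlc⟩ := sInf_lt_iff.1 h
  obtain ⟨γ, h1, h2, h3, h4, rfl⟩ := hl
  exact ⟨γ, h1, h2, h3, h4, hlc⟩

lemma image_two_mul_Icc : (fun t : ℝ => 2 * t) '' Icc 0 (1/2) = Icc (0:ℝ) 1 := by
  ext t
  constructor
  · rintro ⟨u, ⟨hu1, hu2⟩, rfl⟩
    simp only [mem_Icc]
    constructor <;> linarith
  · rintro ⟨h1, h2⟩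
    exact ⟨t / 2, ⟨by linarith, by linarith⟩, by ring⟩

lemma image_two_mul_sub_Icc : (fun t : ℝ => 2 * t - 1) '' Icc (1/2) 1 = Icc (0:ℝ) 1 := by
  ext t
  constructor
  · rintro ⟨u, ⟨hu1, hu2⟩, rfl⟩
    simp only [mem_Icc]
    constructor <;> linarith
  · rintro ⟨h1, h2⟩
    exact ⟨(t + 1) / 2, ⟨by linarith, by linarith⟩, by ring⟩

lemma image_one_sub_Icc : (fun t : ℝ => 1 - t) '' Icc (0:ℝ) 1 = Icc (0:ℝ) 1 := by
  ext t
  constructor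
  · rintro ⟨u, ⟨hu1, hu2⟩, rfl⟩
    simp only [mem_Icc]
    constructor <;> linarith
  · rintro ⟨h1, h2⟩
    exact ⟨1 - t, ⟨by linarith, by linarith⟩, by ring⟩

lemma inducedLengthDist_symm_le (W : Set X) (x y : X) :
    inducedLengthDist W y x ≤ inducedLengthDist W x y := by
  apply sInf_le_sInf
  rintro l ⟨γ, h1, h2, h3, h4, rfl⟩
  refine ⟨γ ∘ fun t => 1 - t, h1.comp (continuous_const.sub continuous_id), by simp [h3],
    by simp [h2], fun u hu => h4 _ (by simp only [mem_Icc]; constructor <;> linarith [hu.1, hu.2]), ?_⟩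
  rw [eVariationOn.comp_eq_of_antitoneOn γ _ (fun a _ b _ hab => by show 1 - b ≤ 1 - a; linarith),
    image_one_sub_Icc]

lemma inducedLengthDist_symm (W : Set X) (x y : X) :
    inducedLengthDist W x y = inducedLengthDist W y x :=
  le_antisymm (inducedLengthDist_symm_le W y x) (inducedLengthDist_symm_le W x y)

lemma inducedLengthDist_triangle (W : Set X) (x y z : X) :
    inducedLengthDist W x z ≤ inducedLengthDist W x y + inducedLengthDist W y z := by
  refine ENNReal.le_of_forall_pos_le_add fun ε hε hfin => ?_
  set d₁ := inducedLengthDist W x y with hd₁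
  set d₂ := inducedLengthDist W y z with hd₂
  have hd₁t : d₁ ≠ ⊤ := fun h => by simp [h] at hfin
  have hd₂t : d₂ ≠ ⊤ := fun h => by simp [h] at hfin
  have hε2 : (0:ℝ≥0∞) < (ε : ℝ≥0∞) / 2 := by
    simp [ENNReal.div_pos_iff, hε.ne']
  obtain ⟨γ₁, hγ₁, h0₁, h1₁, hm₁, hl₁⟩ :=
    exists_path_lt (show d₁ < d₁ + (ε : ℝ≥0∞) / 2 from ENNReal.lt_add_right hd₁t hε2.ne')
  obtain ⟨γ₂, hγ₂, h0₂, h1₂, hm₂, hl₂⟩ :=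
    exists_path_lt (show d₂ < d₂ + (ε : ℝ≥0∞) / 2 from ENNReal.lt_add_right hd₂t hε2.ne')
  set g : ℝ → X := fun t => if t ≤ 1/2 then γ₁ (2 * t) else γ₂ (2 * t - 1) with hg
  have hgc : Continuous g := by
    apply Continuous.if_le (hγ₁.comp (continuous_const.mul continuous_id))
      (hγ₂.comp ((continuous_const.mul continuous_id).sub continuous_const))
      continuous_id continuous_const
    intro t ht
    simp only [id_eq] at ht
    subst ht
    norm_num [h1₁, h0₂]
  have hg0 : g 0 = x := by simp [hg, h0₁]
  have hg1 : g 1 = z := by norm_num [hg, h1₂]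
  have hgm : ∀ u ∈ Icc (0:ℝ) 1, g u ∈ W := by
    intro u hu
    simp only [hg]
    split_ifs with h
    · exact hm₁ _ ⟨by linarith [hu.1], by linarith⟩
    · push_neg at h
      exact hm₂ _ ⟨by linarith, by linarith [hu.2]⟩
  have e1 : eVariationOn g (Icc 0 (1/2)) = eVariationOn γ₁ (Icc (0:ℝ) 1) := by
    have heq : EqOn g (γ₁ ∘ fun t => 2 * t) (Icc 0 (1/2)) := fun t ht => if_pos ht.2
    rw [eVariationOn.eq_of_eqOn heq,
      eVariationOn.comp_eq_of_monotoneOn γ₁ _ (fun a _ b _ hab => by show 2*a ≤ 2*b; linarith),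
      image_two_mul_Icc]
  have e2 : eVariationOn g (Icc (1/2) 1) = eVariationOn γ₂ (Icc (0:ℝ) 1) := by
    have heq : EqOn g (γ₂ ∘ fun t => 2 * t - 1) (Icc (1/2) 1) := by
      intro t ht
      by_cases h : t ≤ 1/2
      · have : t = 1/2 := le_antisymm h ht.1
        subst this
        simp only [hg, Function.comp]
        norm_num [h1₁, h0₂]
      · exact if_neg h
    rw [eVariationOn.eq_of_eqOn heq,
      eVariationOn.comp_eq_of_monotoneOn γ₂ _ (fun a _ b _ hab => by show 2*a-1 ≤ 2*b-1; linarith),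
      image_two_mul_sub_Icc]
  have hsplit : eVariationOn g (Icc (0:ℝ) 1)
      = eVariationOn g (Icc 0 (1/2)) + eVariationOn g (Icc (1/2) 1) := by
    have := eVariationOn.Icc_add_Icc g (s := (univ : Set ℝ))
      (by norm_num : (0:ℝ) ≤ 1/2) (by norm_num : (1:ℝ)/2 ≤ 1) (mem_univ _)
    simpa using this.symm
  calc inducedLengthDist W x z ≤ eVariationOn g (Icc (0:ℝ) 1) :=
        inducedLengthDist_le_of_path hgc hg0 hg1 hgm
    _ = eVariationOn γ₁ (Icc (0:ℝ) 1) + eVariationOn γ₂ (Icc (0:ℝ) 1) := by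
        rw [hsplit, e1, e2]
    _ ≤ (d₁ + (ε : ℝ≥0∞) / 2) + (d₂ + (ε : ℝ≥0∞) / 2) := add_le_add hl₁.le hl₂.le
    _ = d₁ + d₂ + ε := by
        rw [add_add_add_comm, ENNReal.add_halves]

end Aux

/-- Let `S` be a closed subset of a metric space `M` such that the induced length
distance of `M ∖ S` agrees with the ambient distance on `M ∖ S`. Then along any
nondecreasing open exhaustion `W_k` of `M ∖ S`, the induced length distances converge
to the ambient distance uniformly on any compact `K ⊆ W₀` on which `d_{W₀}` is finite. -/
theorem inducedLengthDist_exhaustion_complement_tendstoUniformly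
    {M : Type*} [MetricSpace M] (S : Set M) (hS : IsClosed S)
    (hpath : ∀ x ∈ Sᶜ, ∀ y ∈ Sᶜ, inducedLengthDist Sᶜ x y = edist x y)
    (W : ℕ → Set M) (hW : Monotone W) (hWopen : ∀ k, IsOpen (W k))
    (hWS : ∀ k, W k ⊆ Sᶜ) (hWunion : (⋃ k, W k) = Sᶜ)
    (K : Set M) (hK : IsCompact K) (hKW : K ⊆ W 0)
    (hfin : ∀ x ∈ K, ∀ y ∈ K, inducedLengthDist (W 0) x y < ⊤) :
    Tendsto
      (fun k => ⨆ x ∈ K, ⨆ y ∈ K, (inducedLengthDist (W k) x y - edist x y))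
      atTop (nhds 0) := by
  have hKS : K ⊆ Sᶜ := hKW.trans (hWS 0)
  rw [ENNReal.tendsto_nhds_zero]
  intro ε hε
  -- replace ε by a finite positive real
  set e : ℝ≥0∞ := min ε 1 with he
  have het : e ≠ ⊤ := (min_le_right _ _).trans_lt (by norm_num) |>.ne
  have he0 : e ≠ 0 := ne_of_gt (lt_min hε one_pos)
  set εr : ℝ := e.toReal with hεr
  have hεr0 : 0 < εr := ENNReal.toReal_pos he0 het
  have hofe : ENNReal.ofReal εr ≤ ε := by
    rw [hεr, ENNReal.ofReal_toReal het]
    exact min_le_left _ _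
  set δ : ℝ := εr / 8 with hδ
  have hδ0 : 0 < δ := by positivity
  -- key local claim
  have C : ∀ x ∈ K, ∀ y ∈ K, ∃ (k : ℕ) (ρ : ℝ), 0 < ρ ∧ ∀ x' ∈ K, ∀ y' ∈ K,
      dist x' x < ρ → dist y' y < ρ →
      inducedLengthDist (W k) x' y' ≤ edist x' y' + ENNReal.ofReal εr := by
    intro x hx y hy
    have hxS : x ∈ Sᶜ := hKS hx
    have hyS : y ∈ Sᶜ := hKS hy
    have hxyfin : edist x y ≠ ⊤ := edist_ne_top x y
    have hlt : inducedLengthDist Sᶜ x y < edist x y + ENNReal.ofReal δ := by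
      rw [hpath x hxS y hyS]
      exact ENNReal.lt_add_right hxyfin (by simp [ENNReal.ofReal_eq_zero, hδ0.not_ge])
    obtain ⟨γ, hγ, hγ0, hγ1, hγm, hγl⟩ := exists_path_lt hlt
    -- the image of γ is compact in Sᶜ, hence inside some W k
    have hcpt : IsCompact (γ '' Icc (0:ℝ) 1) := (isCompact_Icc.image hγ)
    have hcov : γ '' Icc (0:ℝ) 1 ⊆ ⋃ i, W i := by
      rw [hWunion]
      rintro _ ⟨u, hu, rfl⟩
      exact hγm u hu
    obtain ⟨t, ht⟩ := hcpt.elim_finite_subcover W hWopen hcov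
    set k : ℕ := t.sup id with hk
    have him : γ '' Icc (0:ℝ) 1 ⊆ W k := by
      intro z hz
      obtain ⟨i, hit, hzi⟩ := mem_iUnion₂.1 (ht hz)
      exact hW (Finset.le_sup (f := id) hit) hzi
    have hxW : x ∈ W k := hγ0 ▸ him ⟨0, left_mem_Icc.2 one_pos.le, rfl⟩
    have hyW : y ∈ W k := hγ1 ▸ him ⟨1, right_mem_Icc.2 one_pos.le, rfl⟩
    obtain ⟨rx, hrx0, hrx⟩ := Metric.isOpen_iff.1 (hWopen k) x hxW
    obtain ⟨ry, hry0, hry⟩ := Metric.isOpen_iff.1 (hWopen k) y hyW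
    set r : ℝ := min rx ry with hr
    have hr0 : 0 < r := lt_min hrx0 hry0
    refine ⟨k, min (r/4) δ, lt_min (by positivity) hδ0, ?_⟩
    intro x' hx' y' hy' hdx hdy
    set ρ : ℝ := min (r/4) δ with hρ
    have hρ0 : 0 < ρ := lt_min (by positivity) hδ0
    have hρr : ρ ≤ r / 4 := min_le_left _ _
    have hρδ : ρ ≤ δ := min_le_right _ _
    -- a short connecting path from a to b, staying in `W k` (ball centered at start a)
    have short : ∀ (a b : M), a ∈ Sᶜ → b ∈ Sᶜ →
        Metric.ball a r ⊆ W k → dist a b < ρ →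
        inducedLengthDist (W k) a b ≤ ENNReal.ofReal (2 * ρ) := by
      intro a b haS hbS hball hdab
      have hablt : inducedLengthDist Sᶜ a b < ENNReal.ofReal ρ + ENNReal.ofReal ρ := by
        rw [hpath a haS b hbS]
        calc edist a b < ENNReal.ofReal ρ := edist_lt_ofReal.2 hdab
          _ ≤ _ := le_add_self
      obtain ⟨σ, hσ, hσ0, hσ1, hσm, hσl⟩ := exists_path_lt hablt
      have hσW : ∀ u ∈ Icc (0:ℝ) 1, σ u ∈ W k := by
        intro u hu
        apply hball
        have h1 : edist (σ 0) (σ u) ≤ eVariationOn σ (Icc (0:ℝ) 1) :=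
          eVariationOn.edist_le σ (left_mem_Icc.2 one_pos.le) hu
        have h4 : edist a (σ u) < ENNReal.ofReal r := by
          rw [← hσ0]
          refine (h1.trans_lt hσl).trans_le ?_
          rw [← ENNReal.ofReal_add hρ0.le hρ0.le]
          exact ENNReal.ofReal_le_ofReal (by linarith)
        rw [Metric.mem_ball, dist_comm]
        exact edist_lt_ofReal.1 h4
      calc inducedLengthDist (W k) a b ≤ eVariationOn σ (Icc (0:ℝ) 1) :=
            inducedLengthDist_le_of_path hσ hσ0 hσ1 hσW
        _ ≤ ENNReal.ofReal ρ + ENNReal.ofReal ρ := hσl.le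
        _ = ENNReal.ofReal (2 * ρ) := by
            rw [← ENNReal.ofReal_add hρ0.le hρ0.le]; ring_nf
    have hx'S : x' ∈ Sᶜ := hKS hx'
    have hy'S : y' ∈ Sᶜ := hKS hy'
    have hxr : Metric.ball x r ⊆ W k := (Metric.ball_subset_ball (min_le_left _ _)).trans hrx
    have hyr : Metric.ball y r ⊆ W k := (Metric.ball_subset_ball (min_le_right _ _)).trans hry
    have hσx : inducedLengthDist (W k) x' x ≤ ENNReal.ofReal (2 * ρ) := by
      rw [inducedLengthDist_symm]
      exact short x x' hxS hx'S hxr (by rwa [dist_comm])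
    have hτy : inducedLengthDist (W k) y y' ≤ ENNReal.ofReal (2 * ρ) :=
      short y y' hyS hy'S hyr (by rwa [dist_comm])
    have hγW : inducedLengthDist (W k) x y ≤ edist x y + ENNReal.ofReal δ := by
      refine le_trans (inducedLengthDist_le_of_path hγ hγ0 hγ1 ?_) hγl.le
      intro u hu
      exact him ⟨u, hu, rfl⟩
    -- assemble via triangle inequalities
    have tri : inducedLengthDist (W k) x' y' ≤
        inducedLengthDist (W k) x' x + inducedLengthDist (W k) x y
          + inducedLengthDist (W k) y y' := by
      calc inducedLengthDist (W k) x' y'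
          ≤ inducedLengthDist (W k) x' x + inducedLengthDist (W k) x y' :=
            inducedLengthDist_triangle (W k) x' x y'
        _ ≤ inducedLengthDist (W k) x' x +
            (inducedLengthDist (W k) x y + inducedLengthDist (W k) y y') :=
            add_le_add le_rfl (inducedLengthDist_triangle (W k) x y y')
        _ = _ := (add_assoc _ _ _).symm
    have hxyle : edist x y ≤ ENNReal.ofReal ρ + edist x' y' + ENNReal.ofReal ρ := by
      calc edist x y ≤ edist x x' + edist x' y := edist_triangle _ _ _
        _ ≤ edist x x' + (edist x' y' + edist y' y) :=
            add_le_add le_rfl (edist_triangle _ _ _)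
        _ ≤ ENNReal.ofReal ρ + (edist x' y' + ENNReal.ofReal ρ) := by
            gcongr
            · rw [edist_comm]; exact (edist_lt_ofReal.2 hdx).le
            · exact (edist_lt_ofReal.2 hdy).le
        _ = _ := (add_assoc _ _ _).symm
    have hsum : ENNReal.ofReal (2*ρ) + ENNReal.ofReal ρ + ENNReal.ofReal ρ
        + ENNReal.ofReal δ + ENNReal.ofReal (2*ρ) ≤ ENNReal.ofReal εr := by
      rw [← ENNReal.ofReal_add (by positivity) (by positivity),
        ← ENNReal.ofReal_add (by positivity) (by positivity),
        ← ENNReal.ofReal_add (by positivity) (by positivity),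
        ← ENNReal.ofReal_add (by positivity) (by positivity)]
      apply ENNReal.ofReal_le_ofReal
      have h1 : ρ ≤ εr / 8 := hρδ.trans_eq hδ
      have h2 : δ = εr / 8 := hδ
      linarith
    calc inducedLengthDist (W k) x' y'
        ≤ inducedLengthDist (W k) x' x + inducedLengthDist (W k) x y
          + inducedLengthDist (W k) y y' := tri
      _ ≤ ENNReal.ofReal (2*ρ) + ((ENNReal.ofReal ρ + edist x' y' + ENNReal.ofReal ρ)
            + ENNReal.ofReal δ) + ENNReal.ofReal (2*ρ) :=
          add_le_add (add_le_add hσx (hγW.trans (add_le_add hxyle le_rfl))) hτy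
      _ = edist x' y' + (ENNReal.ofReal (2*ρ) + ENNReal.ofReal ρ + ENNReal.ofReal ρ
            + ENNReal.ofReal δ + ENNReal.ofReal (2*ρ)) := by ring
      _ ≤ edist x' y' + ENNReal.ofReal εr := add_le_add le_rfl hsum
  -- choose the data and extract a finite subcover of K × K
  choose! k ρ hρ0 hC using C
  set U : K × K → Set (M × M) := fun q =>
    Metric.ball (q.1 : M) (ρ q.1 q.2) ×ˢ Metric.ball (q.2 : M) (ρ q.1 q.2) with hU
  have hUopen : ∀ q, IsOpen (U q) := fun q =>
    (Metric.isOpen_ball).prod Metric.isOpen_ball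
  have hUcov : K ×ˢ K ⊆ ⋃ q, U q := by
    rintro ⟨a, b⟩ ⟨ha, hb⟩
    refine mem_iUnion.2 ⟨(⟨a, ha⟩, ⟨b, hb⟩), ?_⟩
    exact ⟨Metric.mem_ball_self (hρ0 a ha b hb), Metric.mem_ball_self (hρ0 a ha b hb)⟩
  obtain ⟨t, ht⟩ := (hK.prod hK).elim_finite_subcover U hUopen hUcov
  set N : ℕ := t.sup fun q => k q.1 q.2 with hN
  filter_upwards [eventually_ge_atTop N] with m hm
  refine iSup₂_le fun x' hx' => iSup₂_le fun y' hy' => ?_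
  rw [tsub_le_iff_right]
  obtain ⟨q, hqt, hq⟩ := mem_iUnion₂.1 (ht (mk_mem_prod hx' hy'))
  obtain ⟨hq1, hq2⟩ := hq
  have hkm : k q.1 q.2 ≤ m := le_trans (Finset.le_sup (f := fun q => k q.1 q.2) hqt) hm
  have := hC q.1 q.1.2 q.2 q.2.2 x' hx' y' hy' (Metric.mem_ball.1 hq1) (Metric.mem_ball.1 hq2)
  calc inducedLengthDist (W m) x' y'
      ≤ inducedLengthDist (W (k q.1 q.2)) x' y' := inducedLengthDist_mono (hW hkm) _ _
    _ ≤ edist x' y' + ENNReal.ofReal εr := this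
    _ ≤ ε + edist x' y' := by rw [add_comm]; gcongr
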